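/- arXiv:funct-an/9509002 — 3 statements merged into one kernel-verified Lean document; each statement's English description precedes it below -/
import Mathlib

section
/- Let v(·,λ) be as above and suppose λ₀ is such that v(ℓ, λ₀) = 0 (a Dirichlet eigenvalue). Then (∂v/∂λ)(ℓ, λ₀) = (∫₀^ℓ v(y,λ₀)² dy) / v'(ℓ, λ₀); in particular (∂v/∂λ)(ℓ, λ₀) ≠ 0, so Dirichlet eigenvalues are simple zeros of λ ↦ v(ℓ,λ). -/
open Set Filter Topology

/-!
Differentiating the Wronskian identity
`v'(ℓ,λ₀) v(ℓ,μ) - v(ℓ,λ₀) v'(ℓ,μ) = (μ - λ₀) ∫₀^ℓ v(·,λ₀) v(·,μ)` in `μ` at `μ = λ₀`, where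
`v(ℓ,λ₀) = 0`, gives `v'(ℓ,λ₀) ∂_λ v(ℓ,λ₀) = ∫₀^ℓ v(·,λ₀)²`. Passing to the limit under the
integral is justified by the locally uniform bound on `v` coming from a Grönwall estimate for the
energy `v² + v'²`. The same estimate, run backwards from `ℓ`, shows that `v'(ℓ,λ₀) ≠ 0`.
-/

def SolvesSchrodinger (V : ℝ → ℝ) (lam : ℝ) (s : Set ℝ) (u u' : ℝ → ℝ) : Prop :=
  ∀ x ∈ s, HasDerivWithinAt u (u' x) s x ∧ HasDerivWithinAt u' (V x * u x - lam * u x) s x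

theorem antitoneOn_mul_exp_neg_of_hasDerivWithinAt_le {s : Set ℝ} (hs : Convex ℝ s)
    {f f' : ℝ → ℝ} {C : ℝ} (hf : ∀ x ∈ s, HasDerivWithinAt f (f' x) s x)
    (hle : ∀ x ∈ s, f' x ≤ C * f x) :
    AntitoneOn (fun x => f x * Real.exp (-(C * x))) s := by
  have hexp : ∀ x, HasDerivAt (fun x => Real.exp (-(C * x))) (Real.exp (-(C * x)) * -C) x :=
    fun x => by simpa using ((hasDerivAt_id x).const_mul C).neg.exp
  refine antitoneOn_of_hasDerivWithinAt_nonpos hs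
    (fun x hx => (hf x hx).continuousWithinAt.mul (hexp x).continuousAt.continuousWithinAt)
    (f' := fun x => (f' x - C * f x) * Real.exp (-(C * x))) (fun x hx => ?_) fun x hx => ?_
  · refine (((hf x (interior_subset hx)).mul (hexp x).hasDerivWithinAt).mono
      interior_subset).congr_deriv ?_
    ring
  · exact mul_nonpos_of_nonpos_of_nonneg (sub_nonpos.2 (hle x (interior_subset hx)))
      (Real.exp_pos _).le

theorem abs_two_mul_mul_mul_le {p q r K : ℝ} (hr : |r| ≤ K) :
    |2 * p * q * r| ≤ K * (p ^ 2 + q ^ 2) := by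
  have hpq : |2 * p * q| ≤ p ^ 2 + q ^ 2 :=
    abs_le.2 ⟨by nlinarith [sq_nonneg (p + q)], by nlinarith [sq_nonneg (p - q)]⟩
  calc |2 * p * q * r| = |2 * p * q| * |r| := abs_mul _ _
    _ ≤ (p ^ 2 + q ^ 2) * K := mul_le_mul hpq hr (abs_nonneg _) (by positivity)
    _ = K * (p ^ 2 + q ^ 2) := mul_comm _ _

theorem exists_forall_abs_one_add_sub_le {V : ℝ → ℝ} {a b : ℝ} (hV : ContinuousOn V (Icc a b)) :
    ∃ B, ∀ lam, ∀ x ∈ Icc a b, |1 + V x - lam| ≤ B + |lam| := by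
  obtain ⟨C, hC⟩ := isCompact_Icc.exists_bound_of_continuousOn hV
  refine ⟨1 + C, fun lam x hx => ?_⟩
  calc |1 + V x - lam| ≤ |1 + V x| + |lam| := abs_sub _ _
    _ ≤ 1 + C + |lam| := by
      gcongr
      exact (abs_add_le _ _).trans (by simpa using hC x hx)

theorem hasDerivAt_sub_mul_of_continuousAt {G : ℝ → ℝ} {a : ℝ} (hG : ContinuousAt G a) :
    HasDerivAt (fun x => (x - a) * G x) (G a) a := by
  rw [hasDerivAt_iff_tendsto_slope]
  refine (hG.tendsto.mono_left nhdsWithin_le_nhds).congr' ?_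
  filter_upwards [self_mem_nhdsWithin] with x hx
  rw [slope_def_field, sub_self, zero_mul, sub_zero, mul_div_cancel_left₀ _ (sub_ne_zero.2 hx)]

namespace SolvesSchrodinger

variable {V : ℝ → ℝ} {lam K a b : ℝ} {s : Set ℝ} {u u' : ℝ → ℝ}

theorem continuousOn (h : SolvesSchrodinger V lam s u u') : ContinuousOn u s :=
  fun x hx => (h x hx).1.continuousWithinAt

theorem continuousOn_deriv (h : SolvesSchrodinger V lam s u u') : ContinuousOn u' s :=
  fun x hx => (h x hx).2.continuousWithinAt

theorem hasDerivWithinAt_energy (h : SolvesSchrodinger V lam s u u') {x : ℝ} (hx : x ∈ s) :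
    HasDerivWithinAt (fun y => u y ^ 2 + u' y ^ 2) (2 * u x * u' x * (1 + V x - lam)) s x := by
  refine (((h x hx).1.fun_pow 2).fun_add ((h x hx).2.fun_pow 2)).congr_deriv ?_
  norm_num
  ring

theorem antitoneOn_energy_mul_exp (h : SolvesSchrodinger V lam s u u') (hs : Convex ℝ s)
    (hK : ∀ x ∈ s, |1 + V x - lam| ≤ K) :
    AntitoneOn (fun x => (u x ^ 2 + u' x ^ 2) * Real.exp (-(K * x))) s :=
  antitoneOn_mul_exp_neg_of_hasDerivWithinAt_le hs (fun _ hx => h.hasDerivWithinAt_energy hx)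
    fun x hx => (le_abs_self _).trans (abs_two_mul_mul_mul_le (hK x hx))

theorem monotoneOn_energy_mul_exp (h : SolvesSchrodinger V lam s u u') (hs : Convex ℝ s)
    (hK : ∀ x ∈ s, |1 + V x - lam| ≤ K) :
    MonotoneOn (fun x => (u x ^ 2 + u' x ^ 2) * Real.exp (K * x)) s := by
  have h' := antitoneOn_mul_exp_neg_of_hasDerivWithinAt_le (C := -K) hs
    (fun _ hx => (h.hasDerivWithinAt_energy hx).fun_neg) fun x hx => by
      linarith [neg_abs_le (2 * u x * u' x * (1 + V x - lam)), abs_two_mul_mul_mul_le (p := u x)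
        (q := u' x) (hK x hx)]
  intro x hx y hy hxy
  simpa only [neg_mul, neg_neg, neg_le_neg_iff] using h' hx hy hxy

theorem energy_le (h : SolvesSchrodinger V lam (Icc a b) u u')
    (hK : ∀ x ∈ Icc a b, |1 + V x - lam| ≤ K) {x : ℝ} (hx : x ∈ Icc a b) :
    u x ^ 2 + u' x ^ 2 ≤ (u a ^ 2 + u' a ^ 2) * Real.exp (K * (x - a)) := by
  have hmono := h.antitoneOn_energy_mul_exp (convex_Icc a b) hK (left_mem_Icc.2 (hx.1.trans hx.2))
    hx hx.1
  calc u x ^ 2 + u' x ^ 2 = (u x ^ 2 + u' x ^ 2) * Real.exp (-(K * x)) * Real.exp (K * x) := by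
        rw [mul_assoc, ← Real.exp_add, neg_add_cancel, Real.exp_zero, mul_one]
    _ ≤ (u a ^ 2 + u' a ^ 2) * Real.exp (-(K * a)) * Real.exp (K * x) := by gcongr
    _ = (u a ^ 2 + u' a ^ 2) * Real.exp (K * (x - a)) := by
        rw [mul_assoc, ← Real.exp_add, neg_add_eq_sub, ← mul_sub]

theorem deriv_ne_zero_of_eq_zero (h : SolvesSchrodinger V lam (Icc a b) u u')
    (hV : ContinuousOn V (Icc a b)) (hab : a ≤ b) (ha : 0 < u a ^ 2 + u' a ^ 2) (hb : u b = 0) :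
    u' b ≠ 0 := by
  obtain ⟨B, hB⟩ := exists_forall_abs_one_add_sub_le hV
  have hmono := h.monotoneOn_energy_mul_exp (convex_Icc a b) (hB lam)
    (left_mem_Icc.2 hab) (right_mem_Icc.2 hab) hab
  intro hb'
  exact (mul_pos ha (Real.exp_pos _)).not_ge (by simpa [hb, hb'] using hmono)

theorem integral_sq_pos (h : SolvesSchrodinger V lam (Icc a b) u u') (hab : a < b)
    (ha : u' a ≠ 0) : 0 < ∫ x in a..b, u x ^ 2 := by
  refine intervalIntegral.integral_pos hab (h.continuousOn.pow 2) (fun _ _ => sq_nonneg _) ?_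
  by_contra! hzero
  have ha_mem : a ∈ Icc a b := left_mem_Icc.2 hab.le
  have hu0 : HasDerivWithinAt u 0 (Icc a b) a :=
    (hasDerivWithinAt_const a _ 0).congr (fun x hx => (sq_nonpos_iff _).1 (hzero x hx))
      ((sq_nonpos_iff _).1 (hzero a ha_mem))
  exact ha ((uniqueDiffOn_Icc hab a ha_mem).eq_deriv _ (h a ha_mem).1 hu0)

theorem wronskian_sub_eq_integral {μ : ℝ} {w w' : ℝ → ℝ} (hab : a ≤ b)
    (hu : SolvesSchrodinger V lam (Icc a b) u u') (hw : SolvesSchrodinger V μ (Icc a b) w w') :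
    (u' b * w b - u b * w' b) - (u' a * w a - u a * w' a)
      = (μ - lam) * ∫ x in a..b, u x * w x := by
  rw [← intervalIntegral.integral_const_mul]
  refine (intervalIntegral.integral_eq_sub_of_hasDeriv_right_of_le hab
    ((hu.continuousOn_deriv.mul hw.continuousOn).sub (hu.continuousOn.mul hw.continuousOn_deriv))
    (fun x hx => ?_)
    ((continuousOn_const.mul (hu.continuousOn.mul hw.continuousOn)).intervalIntegrable_of_Icc
      hab)).symm
  have hxI := Ioo_subset_Icc_self hx
  refine ((((hu x hxI).2.mul (hw x hxI).1).sub ((hu x hxI).1.mul (hw x hxI).2)).congr_deriv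
    ?_).mono_of_mem_nhdsWithin (Icc_mem_nhdsGT_of_mem ⟨hxI.1, hx.2⟩)
  show _ = (μ - lam) * (u x * w x)
  ring

end SolvesSchrodinger

section Family

variable {V : ℝ → ℝ} {a b : ℝ} {v vx : ℝ → ℝ → ℝ}

theorem exists_forall_abs_le_of_solvesSchrodinger (hV : ContinuousOn V (Icc a b))
    (hsol : ∀ μ, SolvesSchrodinger V μ (Icc a b) (v · μ) (vx · μ))
    (hinit : ∀ μ, v a μ ^ 2 + vx a μ ^ 2 = 1) (R : ℝ) :
    ∃ M, ∀ μ, |μ| ≤ R → ∀ x ∈ Icc a b, |v x μ| ≤ M := by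
  obtain ⟨B, hB⟩ := exists_forall_abs_one_add_sub_le hV
  refine ⟨√(Real.exp ((B + R) * (b - a))), fun μ hμ x hx => Real.abs_le_sqrt ?_⟩
  have hK : ∀ y ∈ Icc a b, |1 + V y - μ| ≤ B + R := fun y hy => (hB μ y hy).trans (by gcongr)
  have hK0 : 0 ≤ B + R := (abs_nonneg _).trans (hK x hx)
  calc v x μ ^ 2 ≤ v x μ ^ 2 + vx x μ ^ 2 := le_add_of_nonneg_right (sq_nonneg _)
    _ ≤ 1 * Real.exp ((B + R) * (x - a)) := hinit μ ▸ (hsol μ).energy_le hK hx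
    _ ≤ Real.exp ((B + R) * (b - a)) := by
        rw [one_mul]
        gcongr
        exact hx.2

theorem continuousAt_integral_mul_of_solvesSchrodinger (hab : a ≤ b)
    (hV : ContinuousOn V (Icc a b)) (hsol : ∀ μ, SolvesSchrodinger V μ (Icc a b) (v · μ) (vx · μ))
    (hinit : ∀ μ, v a μ ^ 2 + vx a μ ^ 2 = 1) {g : ℝ → ℝ} (hg : ContinuousOn g (Icc a b))
    {lam₀ : ℝ} (hcont : ∀ x ∈ Icc a b, ContinuousAt (v x) lam₀) :
    ContinuousAt (fun μ => ∫ x in a..b, g x * v x μ) lam₀ := by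
  obtain ⟨M, hM⟩ := exists_forall_abs_le_of_solvesSchrodinger hV hsol hinit (|lam₀| + 1)
  have hsub : uIoc a b ⊆ Icc a b := by
    rw [uIoc_of_le hab]
    exact Ioc_subset_Icc_self
  have hnear : ∀ᶠ μ in 𝓝 lam₀, |μ| < |lam₀| + 1 :=
    continuous_abs.continuousAt.eventually_lt continuousAt_const (lt_add_one _)
  refine intervalIntegral.continuousAt_of_dominated_interval (bound := fun x => |g x| * M)
    (Eventually.of_forall fun μ => ((hg.mul (hsol μ).continuousOn).mono hsub).aestronglyMeasurable
      measurableSet_uIoc) ?_ ((hg.abs.mul continuousOn_const).intervalIntegrable_of_Icc hab)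
    (MeasureTheory.ae_of_all _ fun x hx => continuousAt_const.mul (hcont x (hsub hx)))
  filter_upwards [hnear] with μ hμ
  refine MeasureTheory.ae_of_all _ fun x hx => ?_
  rw [Real.norm_eq_abs, abs_mul]
  exact mul_le_mul_of_nonneg_left (hM μ hμ.le x (hsub hx)) (abs_nonneg _)

end Family

theorem dirichlet_eigenvalue_simple_general
    (V : ℝ → ℝ) (ℓ : ℝ) (hℓ : 0 < ℓ) (hV : ContinuousOn V (Icc 0 ℓ))
    (v vx dv : ℝ → ℝ → ℝ)
    (hx1 : ∀ lam : ℝ, ∀ x ∈ Icc 0 ℓ,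
      HasDerivWithinAt (fun y => v y lam) (vx x lam) (Icc 0 ℓ) x)
    (hx2 : ∀ lam : ℝ, ∀ x ∈ Icc 0 ℓ,
      HasDerivWithinAt (fun y => vx y lam) (V x * v x lam - lam * v x lam) (Icc 0 ℓ) x)
    (h0 : ∀ lam : ℝ, v 0 lam = 0) (h0' : ∀ lam : ℝ, vx 0 lam = 1)
    (hd1 : ∀ x ∈ Icc 0 ℓ, ∀ lam : ℝ, HasDerivAt (fun mu => v x mu) (dv x lam) lam)
    (lam₀ : ℝ) (hzero : v ℓ lam₀ = 0) :
    dv ℓ lam₀ = (∫ y in (0:ℝ)..ℓ, (v y lam₀) ^ 2) / vx ℓ lam₀ ∧ dv ℓ lam₀ ≠ 0 := by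
  have hsol : ∀ μ, SolvesSchrodinger V μ (Icc 0 ℓ) (v · μ) (vx · μ) :=
    fun μ x hx => ⟨hx1 μ x hx, hx2 μ x hx⟩
  have hinit : ∀ μ, v 0 μ ^ 2 + vx 0 μ ^ 2 = 1 := fun μ => by simp [h0, h0']
  have hvx : vx ℓ lam₀ ≠ 0 :=
    (hsol lam₀).deriv_ne_zero_of_eq_zero hV hℓ.le (by simp [hinit]) hzero
  have hpos : 0 < ∫ y in (0:ℝ)..ℓ, v y lam₀ ^ 2 := (hsol lam₀).integral_sq_pos hℓ (by simp [h0'])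
  have hW : ∀ μ, vx ℓ lam₀ * v ℓ μ = (μ - lam₀) * ∫ y in (0:ℝ)..ℓ, v y lam₀ * v y μ :=
    fun μ => by simpa [h0, h0', hzero] using (hsol lam₀).wronskian_sub_eq_integral hℓ.le (hsol μ)
  have hG := continuousAt_integral_mul_of_solvesSchrodinger hℓ.le hV hsol hinit
    (hsol lam₀).continuousOn fun x hx => (hd1 x hx lam₀).continuousAt
  have hkey : vx ℓ lam₀ * dv ℓ lam₀ = ∫ y in (0:ℝ)..ℓ, v y lam₀ ^ 2 := by
    simpa [sq, hW] using ((hd1 ℓ (right_mem_Icc.2 hℓ.le) lam₀).const_mul (vx ℓ lam₀)).unique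
      ((hasDerivAt_sub_mul_of_continuousAt hG).congr_of_eventuallyEq (Eventually.of_forall hW))
  exact ⟨(eq_div_iff hvx).2 (by rw [mul_comm, hkey]),
    fun hdv => hpos.ne' (by rw [← hkey, hdv, mul_zero])⟩

/-- If `v (ℓ, λ₀) = 0` (a Dirichlet eigenvalue), then
`(∂v/∂λ)(ℓ, λ₀) = (∫₀^ℓ v(y,λ₀)² dy) / v'(ℓ, λ₀)` and in particular
`(∂v/∂λ)(ℓ, λ₀) ≠ 0`: Dirichlet eigenvalues are simple zeros of `λ ↦ v(ℓ, λ)`. -/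
theorem dirichlet_eigenvalue_simple
    (V : ℝ → ℝ) (ℓ : ℝ) (hℓ : 0 < ℓ) (hV : ContinuousOn V (Icc 0 ℓ))
    (v vx dv dvx : ℝ → ℝ → ℝ)
    (hx1 : ∀ lam : ℝ, ∀ x ∈ Icc 0 ℓ,
      HasDerivWithinAt (fun y => v y lam) (vx x lam) (Icc 0 ℓ) x)
    (hx2 : ∀ lam : ℝ, ∀ x ∈ Icc 0 ℓ,
      HasDerivWithinAt (fun y => vx y lam) (V x * v x lam - lam * v x lam) (Icc 0 ℓ) x)
    (h0 : ∀ lam : ℝ, v 0 lam = 0) (h0' : ∀ lam : ℝ, vx 0 lam = 1)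
    (hd1 : ∀ x ∈ Icc 0 ℓ, ∀ lam : ℝ, HasDerivAt (fun mu => v x mu) (dv x lam) lam)
    (hd2 : ∀ x ∈ Icc 0 ℓ, ∀ lam : ℝ, HasDerivAt (fun mu => vx x mu) (dvx x lam) lam)
    (lam₀ : ℝ) (hzero : v ℓ lam₀ = 0) :
    dv ℓ lam₀ = (∫ y in (0:ℝ)..ℓ, (v y lam₀) ^ 2) / vx ℓ lam₀ ∧ dv ℓ lam₀ ≠ 0 :=
  dirichlet_eigenvalue_simple_general V ℓ hℓ hV v vx dv hx1 hx2 h0 h0' hd1 lam₀ hzero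
end

section
/- Suppose v, w : ℝ → ℝ satisfy |v(x)| ≤ 1/10, |v'(x) - 1| ≤ 1/10, |w(x) - 1| ≤ 1/10, |w'(x)| ≤ 1/10 for all x in [0, ℓ₁]. Then for any real constants A, B and ψ(x) := A·w(x) + B·v(x), one has ψ(x)² + ψ'(x)² ≥ (2/25)(A² + B²) for all x ∈ [0, ℓ₁]. -/
open Set

/-- If `|v x| ≤ 1/10`, `|v' x - 1| ≤ 1/10`, `|w x - 1| ≤ 1/10`,
`|w' x| ≤ 1/10` on `[0, ℓ₁]`, then for `ψ = A·w + B·v` (so `ψ' = A·w' + B·v'`) one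
has `ψ(x)² + ψ'(x)² ≥ (2/25)(A² + B²)` on `[0, ℓ₁]`. -/
theorem pointwise_lower_bound
    (ℓ₁ : ℝ) (hℓ₁ : 0 < ℓ₁) (v v' w w' : ℝ → ℝ)
    (hv : ∀ x ∈ Icc 0 ℓ₁, |v x| ≤ 1/10)
    (hv' : ∀ x ∈ Icc 0 ℓ₁, |v' x - 1| ≤ 1/10)
    (hw : ∀ x ∈ Icc 0 ℓ₁, |w x - 1| ≤ 1/10)
    (hw' : ∀ x ∈ Icc 0 ℓ₁, |w' x| ≤ 1/10)
    (hd1 : ∀ x ∈ Icc 0 ℓ₁, HasDerivWithinAt v (v' x) (Icc 0 ℓ₁) x)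
    (hd2 : ∀ x ∈ Icc 0 ℓ₁, HasDerivWithinAt w (w' x) (Icc 0 ℓ₁) x)
    (A B : ℝ) :
    ∀ x ∈ Icc 0 ℓ₁,
      (A * w x + B * v x) ^ 2 + (A * w' x + B * v' x) ^ 2 ≥ 2/25 * (A ^ 2 + B ^ 2) := by
  intro x hx
  obtain ⟨hv1, hv2⟩ := abs_le.mp (hv x hx)
  obtain ⟨hv'1, hv'2⟩ := abs_le.mp (hv' x hx)
  obtain ⟨hw1, hw2⟩ := abs_le.mp (hw x hx)
  obtain ⟨hw'1, hw'2⟩ := abs_le.mp (hw' x hx)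
  set a := v x; set a' := v' x; set b := w x; set b' := w' x
  set X := A * b + B * a with hX
  set Y := A * b' + B * a' with hY
  set d := b * a' - b' * a with hd
  clear_value a a' b b' X Y d
  have hd4 : (4:ℝ)/5 ≤ d := by nlinarith
  have key : d ^ 2 * (A ^ 2 + B ^ 2) = (X * a' - Y * a) ^ 2 + (Y * b - X * b') ^ 2 := by
    rw [hX, hY, hd]; ring
  have hc1 : a * a' + b * b' ≤ 11/50 := by nlinarith
  have hc2 : -(11/50) ≤ a * a' + b * b' := by nlinarith
  have ha'2 : a' ^ 2 + b' ^ 2 ≤ 61/50 := by nlinarith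
  have ha2 : a ^ 2 + b ^ 2 ≤ 61/50 := by nlinarith
  have bnd : (X * a' - Y * a) ^ 2 + (Y * b - X * b') ^ 2 ≤ 36/25 * (X ^ 2 + Y ^ 2) := by
    linarith [mul_nonneg (by linarith : (0:ℝ) ≤ 11/50 - (a * a' + b * b')) (sq_nonneg (X - Y)),
      mul_nonneg (by linarith : (0:ℝ) ≤ 11/50 + (a * a' + b * b')) (sq_nonneg (X + Y)),
      mul_nonneg (by linarith : (0:ℝ) ≤ 61/50 - (a' ^ 2 + b' ^ 2)) (sq_nonneg X),
      mul_nonneg (by linarith : (0:ℝ) ≤ 61/50 - (a ^ 2 + b ^ 2)) (sq_nonneg Y)]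
  have hAB : (16:ℝ)/25 * (A ^ 2 + B ^ 2) ≤ d ^ 2 * (A ^ 2 + B ^ 2) := by
    have h16 : (16:ℝ)/25 ≤ d ^ 2 := by
      have h2 := pow_le_pow_left₀ (by norm_num : (0:ℝ) ≤ 4/5) hd4 2
      norm_num at h2
      linarith
    have h0 : (0:ℝ) ≤ A ^ 2 + B ^ 2 := by positivity
    exact mul_le_mul_of_nonneg_right h16 h0
  have h0 : (0:ℝ) ≤ A ^ 2 + B ^ 2 := by positivity
  linarith [key, bnd, hAB, h0]
end

section
/- Under the hypotheses of the previous estimate, if ψ = A·w + B·v on [0,ℓ₁], then ∫₀^{ℓ₁} (ψ(x)² + ψ'(x)²) dx ≥ (2ℓ₁/25)(A² + B²). In particular A² = ψ(0)² satisfies A² + B² ≤ (25/(2ℓ₁)) (‖ψ‖²_{L²(0,ℓ₁)} + ‖ψ'‖²_{L²(0,ℓ₁)}). -/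
open Set

lemma pointwise_lb (a b c d A B : ℝ) (h1 : |b| ≤ 1/10) (h2 : |d-1| ≤ 1/10)
    (h3 : |a-1| ≤ 1/10) (h4 : |c| ≤ 1/10) :
    2/25*(A^2+B^2) ≤ (A*a+B*b)^2 + (A*c+B*d)^2 := by
  rw [abs_le] at h1 h2 h3 h4
  obtain ⟨h1a, h1b⟩ := h1; obtain ⟨h2a, h2b⟩ := h2
  obtain ⟨h3a, h3b⟩ := h3; obtain ⟨h4a, h4b⟩ := h4
  have ha2 : (81:ℝ)/100 ≤ a^2 := by nlinarith
  have hd2 : (81:ℝ)/100 ≤ d^2 := by nlinarith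
  have hc1 : a*b + c*d ≤ 11/50 := by nlinarith
  have hc2 : -(11/50) ≤ a*b + c*d := by nlinarith
  have hcr : 2*A*B*(a*b+c*d) ≥ -(11/50)*(A^2+B^2) := by
    rcases le_or_gt 0 (A*B) with h | h
    · have h' := mul_le_mul_of_nonneg_left hc2 (by linarith : (0:ℝ) ≤ 2*(A*B))
      nlinarith [sq_nonneg (A-B)]
    · have h' := mul_le_mul_of_nonneg_left hc1 (by linarith : (0:ℝ) ≤ -(2*(A*B)))
      nlinarith [sq_nonneg (A+B)]
  nlinarith [sq_nonneg (A*c), sq_nonneg (B*b),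
    mul_le_mul_of_nonneg_left ha2 (sq_nonneg A), mul_le_mul_of_nonneg_left hd2 (sq_nonneg B)]

/-- Under the bounds of the pointwise estimate, with `ψ = A·w + B·v`,
`∫₀^{ℓ₁} (ψ² + ψ'²) ≥ (2ℓ₁/25)(A² + B²)`; in particular
`A² + B² ≤ (25/(2ℓ₁)) (‖ψ‖² + ‖ψ'‖²)` in `L²(0, ℓ₁)`. -/
theorem integral_lower_bound
    (ℓ₁ : ℝ) (hℓ₁ : 0 < ℓ₁) (v v' w w' : ℝ → ℝ)
    (hv : ∀ x ∈ Icc 0 ℓ₁, |v x| ≤ 1/10)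
    (hv' : ∀ x ∈ Icc 0 ℓ₁, |v' x - 1| ≤ 1/10)
    (hw : ∀ x ∈ Icc 0 ℓ₁, |w x - 1| ≤ 1/10)
    (hw' : ∀ x ∈ Icc 0 ℓ₁, |w' x| ≤ 1/10)
    (hd1 : ∀ x ∈ Icc 0 ℓ₁, HasDerivWithinAt v (v' x) (Icc 0 ℓ₁) x)
    (hd2 : ∀ x ∈ Icc 0 ℓ₁, HasDerivWithinAt w (w' x) (Icc 0 ℓ₁) x)
    (A B : ℝ)
    (hint : IntervalIntegrable
      (fun x => (A * w x + B * v x) ^ 2 + (A * w' x + B * v' x) ^ 2)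
      MeasureTheory.volume 0 ℓ₁) :
    (∫ x in (0:ℝ)..ℓ₁, ((A * w x + B * v x) ^ 2 + (A * w' x + B * v' x) ^ 2))
        ≥ 2 * ℓ₁ / 25 * (A ^ 2 + B ^ 2) ∧
    A ^ 2 + B ^ 2 ≤ 25 / (2 * ℓ₁) *
      ∫ x in (0:ℝ)..ℓ₁, ((A * w x + B * v x) ^ 2 + (A * w' x + B * v' x) ^ 2) := by
  have key : ∀ x ∈ Icc (0:ℝ) ℓ₁,
      (fun _ : ℝ => 2/25*(A^2+B^2)) x ≤
      (fun x => (A * w x + B * v x) ^ 2 + (A * w' x + B * v' x) ^ 2) x := by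
    intro x hx
    exact pointwise_lb (w x) (v x) (w' x) (v' x) A B (hv x hx) (hv' x hx) (hw x hx) (hw' x hx)
  have hmono := intervalIntegral.integral_mono_on hℓ₁.le
    (intervalIntegrable_const) hint key
  rw [intervalIntegral.integral_const, smul_eq_mul, sub_zero] at hmono
  have h1 : (∫ x in (0:ℝ)..ℓ₁, ((A * w x + B * v x) ^ 2 + (A * w' x + B * v' x) ^ 2))
      ≥ 2 * ℓ₁ / 25 * (A ^ 2 + B ^ 2) := by
    calc 2 * ℓ₁ / 25 * (A ^ 2 + B ^ 2) = ℓ₁ * (2/25*(A^2+B^2)) := by ring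
    _ ≤ _ := hmono
  refine ⟨h1, ?_⟩
  rw [div_mul_eq_mul_div, le_div_iff₀ (by linarith : (0:ℝ) < 2 * ℓ₁)]
  nlinarith [hmono]
end
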